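/- Under an (α,β)-admissible smoothing Ψ̃ of the nuclear norm, the GBPA algorithm with potentials Φ̃_t(S) = Ψ̃(S; L_t/η), where L_t = √(G²I + M_t), M_t = Σ_{s=1}^t G_s G_s^T, ||G_t||_op ≤ G for all t, and η = √(α/β), achieves regret Reg_T ≤ 2√(αβ) · D · tr(√(G²I + M_T)) + (1 − √(αβ)) D ||G_1||_*. -/

import Mathlib

open Matrix Finset
open scoped Classical

noncomputable def psqrt {m : ℕ} (A : Matrix (Fin m) (Fin m) ℝ) : Matrix (Fin m) (Fin m) ℝ :=
  if h : A.PosSemidef then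
    (h.1.eigenvectorUnitary : Matrix (Fin m) (Fin m) ℝ) *
      diagonal ((↑) ∘ (√·) ∘ h.1.eigenvalues) *
      (star h.1.eigenvectorUnitary : Matrix (Fin m) (Fin m) ℝ)
  else 0

noncomputable def nuclearNorm {m : ℕ} {n : Type*} [Fintype n]
    (A : Matrix (Fin m) n ℝ) : ℝ :=
  (psqrt (A * Aᵀ)).trace

/-- Frobenius inner product `⟨A, B⟩ = tr(Aᵀ B)`. -/
noncomputable def ip {m : ℕ} {n : Type*} [Fintype n] (A B : Matrix (Fin m) n ℝ) : ℝ :=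
  (Aᵀ * B).trace

/-
Unrolling the GBPA update `X (t+1) = -D ∇Φ_t(S t)` writes the regret exactly as `D Φ_1(S 1)` plus,
for each round, `D` times the change of potential `Φ_{t+1}(S (t+1)) - Φ_t(S t)` minus its linear
prediction. Upper stability bounds the part due to `L t ⪯ L (t+1)` by `(α/η) tr(L (t+1) - L t)`,
which telescopes, and smoothness bounds the Bregman divergence by
`(βη/2) tr(L t⁻¹ G (t+1) G (t+1)ᵀ)`; `η = √(α/β)` makes both coefficients `√(αβ)`.

For the trace potential lemma fix `r < 1` and the invertible `Q t = √(r² M t + (1 - r²) Gb² I)`.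
As `G (t+1) G (t+1)ᵀ ⪯ Gb² I`, `L t² ⪰ Q (t+1)²`, so `L t ⪰ Q (t+1)` (the square root is operator
monotone) and `L t⁻¹ ⪯ Q (t+1)⁻¹`. Since `Q (t+1)² - Q t² = r² G (t+1) G (t+1)ᵀ`, and
expanding `tr(Q⁻¹ (Q - R)²) ≥ 0` (`R` symmetric) gives `tr(Q⁻¹ (Q² - R²)) ≤ 2 tr(Q - R)`, the sum
telescopes; finally `Q T ⪯ L T`, `Q 1 ⪰ r √(M 1)`, and `r → 1`.
-/

open scoped MatrixOrder

namespace Matrix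

variable {n : Type*} [Fintype n] {A B C : Matrix n n ℝ}

lemma trace_le_trace_of_le (h : A ≤ B) : A.trace ≤ B.trace := by
  simpa [trace_sub] using (le_iff.mp h).trace_nonneg

lemma posSemidef_self_mul_transpose {m : Type*} [Finite m] (A : Matrix m n ℝ) :
    (A * Aᵀ).PosSemidef := by
  simpa using posSemidef_self_mul_conjTranspose A

variable [DecidableEq n]

lemma PosSemidef.trace_mul_nonneg (hA : A.PosSemidef) (hB : B.PosSemidef) :
    0 ≤ (A * B).trace := by
  have hs : (CFC.sqrt A).PosSemidef := nonneg_iff_posSemidef.mp (CFC.sqrt_nonneg A)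
  have h : (A * B).trace = ((CFC.sqrt A)ᴴ * B * CFC.sqrt A).trace := by
    rw [hs.1, trace_mul_cycle, CFC.sqrt_mul_sqrt_self A hA.nonneg]
  exact h ▸ (hB.conjTranspose_mul_mul_same _).trace_nonneg

lemma trace_mul_le_trace_mul_of_le (hAB : A ≤ B) (hC : C.PosSemidef) :
    (A * C).trace ≤ (B * C).trace := by
  simpa [sub_mul, trace_sub] using (le_iff.mp hAB).trace_mul_nonneg hC

lemma inv_le_inv_of_le (hA : A.PosDef) (hAB : A ≤ B) : B⁻¹ ≤ A⁻¹ := by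
  have hB : B.PosDef := by simpa using hA.add_posSemidef (le_iff.mp hAB)
  have hAu : IsUnit A.det := hA.det_pos.ne'.isUnit
  have hBu : IsUnit B.det := hB.det_pos.ne'.isUnit
  set Δ := B - A
  have hBinv : (B⁻¹)ᴴ = B⁻¹ := hB.inv.1
  have hΔ : Δᴴ = Δ := (le_iff.mp hAB).1
  -- `A⁻¹ - B⁻¹ = A⁻¹ Δ B⁻¹` and `A⁻¹ = B⁻¹ + B⁻¹ Δ A⁻¹` give a sum of two congruences
  have key : A⁻¹ - B⁻¹ = (B⁻¹)ᴴ * Δ * B⁻¹ + (Δ * B⁻¹)ᴴ * A⁻¹ * (Δ * B⁻¹) := by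
    rw [conjTranspose_mul, hBinv, hΔ]
    have e1 : A⁻¹ - B⁻¹ = A⁻¹ * Δ * B⁻¹ := by
      simp only [Δ, Matrix.mul_sub, Matrix.sub_mul, nonsing_inv_mul _ hAu, Matrix.one_mul,
        Matrix.mul_assoc, mul_nonsing_inv _ hBu, Matrix.mul_one]
    have e2 : A⁻¹ = B⁻¹ + B⁻¹ * Δ * A⁻¹ := by
      simp only [Δ, Matrix.mul_sub, Matrix.sub_mul, nonsing_inv_mul _ hBu, Matrix.one_mul,
        Matrix.mul_assoc, mul_nonsing_inv _ hAu, Matrix.mul_one]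
      abel
    conv_lhs => rw [e1, e2]
    noncomm_ring
  rw [le_iff, key]
  exact ((le_iff.mp hAB).conjTranspose_mul_mul_same _).add
    (hA.inv.posSemidef.conjTranspose_mul_mul_same _)

lemma trace_inv_mul_mul_self_sub_le (hA : A.PosDef) (hB : B.IsHermitian) :
    (A⁻¹ * (A * A - B * B)).trace ≤ 2 * (A.trace - B.trace) := by
  have hAu : IsUnit A.det := hA.det_pos.ne'.isUnit
  have h0 : 0 ≤ ((A - B)ᴴ * A⁻¹ * (A - B)).trace :=
    (hA.inv.posSemidef.conjTranspose_mul_mul_same _).trace_nonneg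
  have e1 : (A - B)ᴴ * A⁻¹ * (A - B) = A - B - B + B * A⁻¹ * B := by
    rw [(hA.1.sub hB).eq]
    simp only [Matrix.mul_sub, Matrix.sub_mul, Matrix.mul_assoc, nonsing_inv_mul _ hAu,
      mul_nonsing_inv_cancel_left _ _ hAu, Matrix.mul_one]
    abel
  have e2 : A⁻¹ * (A * A - B * B) = A - A⁻¹ * B * B := by
    rw [Matrix.mul_sub, ← Matrix.mul_assoc, nonsing_inv_mul _ hAu, Matrix.one_mul, Matrix.mul_assoc]
  rw [e1] at h0
  rw [e2]
  simp only [trace_add, trace_sub] at h0 ⊢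
  rw [trace_mul_cycle, trace_mul_cycle] at h0
  linarith

lemma dotProduct_mul_self_sub_mul_self_mulVec_eigenvector (hH : (B - A).IsHermitian)
    {u : n → ℝ} {μ : ℝ} (hu : (B - A) *ᵥ u = μ • u) :
    u ⬝ᵥ (B * B - A * A) *ᵥ u = μ * (u ⬝ᵥ B *ᵥ u + u ⬝ᵥ A *ᵥ u) := by
  have hsymm : ∀ v, ((B - A) *ᵥ u) ⬝ᵥ v = u ⬝ᵥ ((B - A) *ᵥ v) := fun v => by
    rw [dotProduct_mulVec, ← mulVec_transpose, ← conjTranspose_eq_transpose_of_trivial, hH.eq]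
  have e : (B + A) * (B - A) + (B - A) * (B + A) = (B * B - A * A) + (B * B - A * A) := by
    noncomm_ring
  have e' := congrArg (fun N => u ⬝ᵥ N *ᵥ u) e
  simp only [add_mulVec, ← mulVec_mulVec, dotProduct_add, ← hsymm, hu, mulVec_smul,
    dotProduct_smul, smul_dotProduct, smul_eq_mul] at e'
  linarith

lemma le_of_mul_self_le_mul_self (hA : A.PosSemidef) (hB : B.PosSemidef) (h : A * A ≤ B * B) :
    A ≤ B := by
  have hH : (B - A).IsHermitian := hB.1.sub hA.1
  rw [le_iff, hH.posSemidef_iff_eigenvalues_nonneg]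
  intro i
  set μ := hH.eigenvalues i
  set u := (hH.eigenvectorBasis i).ofLp
  have hu : u ≠ 0 := by simpa [u] using hH.eigenvectorBasis.orthonormal.ne_zero i
  have heig : (B - A) *ᵥ u = μ • u := hH.mulVec_eigenvectorBasis i
  have hquad := dotProduct_mul_self_sub_mul_self_mulVec_eigenvector hH heig
  by_contra! hneg
  simp only [Pi.zero_apply] at hneg
  have hsq : 0 ≤ u ⬝ᵥ (B * B - A * A) *ᵥ u := by
    simpa using (le_iff.mp h).dotProduct_mulVec_nonneg u
  have hBu0 : 0 ≤ u ⬝ᵥ B *ᵥ u := by simpa using hB.dotProduct_mulVec_nonneg u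
  have hAu0 : 0 ≤ u ⬝ᵥ A *ᵥ u := by simpa using hA.dotProduct_mulVec_nonneg u
  have hzero : u ⬝ᵥ B *ᵥ u + u ⬝ᵥ A *ᵥ u = 0 := by nlinarith
  have hBu : B *ᵥ u = 0 :=
    (hB.dotProduct_mulVec_zero_iff u).mp (by simp only [star_trivial]; linarith)
  have hAu : A *ᵥ u = 0 :=
    (hA.dotProduct_mulVec_zero_iff u).mp (by simp only [star_trivial]; linarith)
  have : μ • u = 0 := by rw [← heig, sub_mulVec, hBu, hAu, sub_zero]
  exact hu ((smul_eq_zero.mp this).resolve_left hneg.ne)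

lemma trace_inv_mul_mul_self_sub_le_of_mul_self_le {L Q R : Matrix n n ℝ} (hQ : Q.PosDef)
    (hL : L.PosSemidef) (hQL : Q * Q ≤ L * L) (hR : R.IsHermitian) (hRQ : R * R ≤ Q * Q) :
    (L⁻¹ * (Q * Q - R * R)).trace ≤ 2 * (Q.trace - R.trace) :=
  calc (L⁻¹ * (Q * Q - R * R)).trace
      ≤ (Q⁻¹ * (Q * Q - R * R)).trace :=
        trace_mul_le_trace_mul_of_le
          (inv_le_inv_of_le hQ (le_of_mul_self_le_mul_self hQ.posSemidef hL hQL)) hRQ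
    _ ≤ 2 * (Q.trace - R.trace) := trace_inv_mul_mul_self_sub_le hQ hR

end Matrix

open Matrix

section Psqrt

variable {k : ℕ} {A B : Matrix (Fin k) (Fin k) ℝ}

lemma psqrt_eq_cfcSqrt (hA : A.PosSemidef) : psqrt A = CFC.sqrt A := by
  rw [psqrt, dif_pos hA, CFC.sqrt_eq_real_sqrt A hA.nonneg, cfcₙ_eq_cfc, hA.1.cfc_eq,
    IsHermitian.cfc, Unitary.conjStarAlgAut_apply]
  simp [Function.comp_def]

lemma Matrix.PosSemidef.psqrt (hA : A.PosSemidef) : (psqrt A).PosSemidef := by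
  rw [psqrt_eq_cfcSqrt hA]
  exact nonneg_iff_posSemidef.mp (CFC.sqrt_nonneg A)

lemma Matrix.PosDef.psqrt (hA : A.PosDef) : (psqrt A).PosDef := by
  rw [psqrt_eq_cfcSqrt hA.posSemidef, ← isStrictlyPositive_iff_posDef]
  exact (isStrictlyPositive_iff_posDef.mpr hA).sqrt

lemma psqrt_mul_psqrt (hA : A.PosSemidef) : psqrt A * psqrt A = A := by
  rw [psqrt_eq_cfcSqrt hA]
  exact CFC.sqrt_mul_sqrt_self A hA.nonneg

lemma psqrt_le_psqrt (hA : A.PosSemidef) (hAB : A ≤ B) : psqrt A ≤ psqrt B := by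
  have hB : B.PosSemidef := by simpa using hA.add (le_iff.mp hAB)
  refine le_of_mul_self_le_mul_self hA.psqrt hB.psqrt ?_
  rwa [psqrt_mul_psqrt hA, psqrt_mul_psqrt hB]


lemma sq_mul_trace_inv_psqrt_mul_le {Gb r : ℝ} (hGb : 0 < Gb) (hr0 : 0 < r) (hr1 : r < 1)
    {M Δ : Matrix (Fin k) (Fin k) ℝ} (hM : M.PosSemidef) (hΔ : Δ.PosSemidef)
    (hΔle : Δ ≤ Gb ^ 2 • 1) :
    r ^ 2 * ((psqrt (Gb ^ 2 • 1 + M))⁻¹ * Δ).trace ≤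
      2 * ((psqrt (r ^ 2 • (M + Δ) + ((1 - r ^ 2) * Gb ^ 2) • 1)).trace -
        (psqrt (r ^ 2 • M + ((1 - r ^ 2) * Gb ^ 2) • 1)).trace) := by
  set c := (1 - r ^ 2) * Gb ^ 2
  have hc : 0 < c := mul_pos (by nlinarith) (by positivity)
  have hreg : ∀ N : Matrix (Fin k) (Fin k) ℝ, N.PosSemidef → (r ^ 2 • N + c • 1).PosDef :=
    fun N hN => PosDef.posSemidef_add (hN.smul (sq_nonneg r)) (PosDef.one.smul hc)
  have hP : (Gb ^ 2 • 1 + M).PosSemidef := (PosSemidef.one.smul (sq_nonneg Gb)).add hM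
  set L := psqrt (Gb ^ 2 • 1 + M)
  set Q := psqrt (r ^ 2 • (M + Δ) + c • 1)
  set R := psqrt (r ^ 2 • M + c • 1)
  have hLL : L * L = Gb ^ 2 • 1 + M := psqrt_mul_psqrt hP
  have hQQ : Q * Q = r ^ 2 • (M + Δ) + c • 1 :=
    psqrt_mul_psqrt (hreg _ (hM.add hΔ)).posSemidef
  have hRR : R * R = r ^ 2 • M + c • 1 := psqrt_mul_psqrt (hreg _ hM).posSemidef
  have hQL : Q * Q ≤ L * L := by
    rw [hQQ, hLL, le_iff, show Gb ^ 2 • 1 + M - (r ^ 2 • (M + Δ) + c • 1) =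
      r ^ 2 • (Gb ^ 2 • 1 - Δ) + (1 - r ^ 2) • M by module]
    exact ((le_iff.mp hΔle).smul (sq_nonneg r)).add (hM.smul (by nlinarith))
  have hQR : Q * Q - R * R = r ^ 2 • Δ := by
    rw [hQQ, hRR]
    module
  have hRQ : R * R ≤ Q * Q := by
    rw [le_iff, hQR]
    exact hΔ.smul (sq_nonneg r)
  have h := trace_inv_mul_mul_self_sub_le_of_mul_self_le (hreg _ (hM.add hΔ)).psqrt hP.psqrt hQL
    (hreg _ hM).psqrt.1 hRQ
  rwa [hQR, Matrix.mul_smul, trace_smul, smul_eq_mul] at h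

end Psqrt

open Filter Topology in
lemma le_sub_of_forall_sq_mul_le {x a b : ℝ} (h : ∀ r ∈ Set.Ioo (0 : ℝ) 1, r ^ 2 * x ≤ a - r * b) :
    x ≤ a - b := by
  have hlim : Tendsto (fun r : ℝ => r ^ 2 * x + r * b) (𝓝[<] 1) (𝓝 (1 ^ 2 * x + 1 * b)) :=
    ((by fun_prop : Continuous fun r : ℝ => r ^ 2 * x + r * b).tendsto 1).mono_left
      nhdsWithin_le_nhds
  have hle : 1 ^ 2 * x + 1 * b ≤ a :=
    le_of_tendsto hlim (eventually_of_mem (Ioo_mem_nhdsLT one_pos) fun r hr => by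
      linarith [h r hr])
  linarith

section TracePotential

variable {k : ℕ} {n : Type*} [Fintype n] {G : ℕ → Matrix (Fin k) n ℝ}
  {M : ℕ → Matrix (Fin k) (Fin k) ℝ}

lemma gram_succ (hM : ∀ t, M t = ∑ s ∈ Icc 1 t, G s * (G s)ᵀ) (t : ℕ) :
    M (t + 1) = M t + G (t + 1) * (G (t + 1))ᵀ := by
  rw [hM, hM, sum_Icc_succ_top (Nat.le_add_left 1 t)]

lemma posSemidef_gram (hM : ∀ t, M t = ∑ s ∈ Icc 1 t, G s * (G s)ᵀ) (t : ℕ) :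
    (M t).PosSemidef :=
  hM t ▸ posSemidef_sum _ fun s _ => posSemidef_self_mul_transpose (G s)

lemma nuclearNorm_eq_trace_psqrt_gram (hM : ∀ t, M t = ∑ s ∈ Icc 1 t, G s * (G s)ᵀ) :
    nuclearNorm (G 1) = (psqrt (M 1)).trace := by
  simp [nuclearNorm, hM]

lemma sq_mul_sum_trace_inv_psqrt_mul_le {Gb r : ℝ} (hGb : 0 < Gb) (hr0 : 0 < r) (hr1 : r < 1)
    {T : ℕ} (hT : 1 ≤ T)
    (hG : ∀ t, 1 ≤ t → t ≤ T → G t * (G t)ᵀ ≤ Gb ^ 2 • 1)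
    (hM : ∀ t, M t = ∑ s ∈ Icc 1 t, G s * (G s)ᵀ) :
    r ^ 2 * ∑ t ∈ Ico 1 T, ((psqrt (Gb ^ 2 • 1 + M t))⁻¹ * (G (t + 1) * (G (t + 1))ᵀ)).trace ≤
      2 * ((psqrt (Gb ^ 2 • 1 + M T)).trace - r * nuclearNorm (G 1)) := by
  set c := (1 - r ^ 2) * Gb ^ 2
  have hc : 0 < c := mul_pos (by nlinarith) (by positivity)
  set Q : ℕ → Matrix (Fin k) (Fin k) ℝ := fun t => psqrt (r ^ 2 • M t + c • 1)
  have hreg : ∀ t, (r ^ 2 • M t + c • 1).PosSemidef := fun t =>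
    ((posSemidef_gram hM t).smul (sq_nonneg r)).add (PosSemidef.one.smul hc.le)
  have hsum : r ^ 2 * ∑ t ∈ Ico 1 T,
      ((psqrt (Gb ^ 2 • 1 + M t))⁻¹ * (G (t + 1) * (G (t + 1))ᵀ)).trace ≤
        2 * ((Q T).trace - (Q 1).trace) := by
    rw [mul_sum, ← sum_Ico_sub (fun t => (Q t).trace) hT, mul_sum]
    refine sum_le_sum fun t ht => ?_
    have h := sq_mul_trace_inv_psqrt_mul_le hGb hr0 hr1 (posSemidef_gram hM t)
      (posSemidef_self_mul_transpose (G (t + 1)))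
      (hG (t + 1) (Nat.le_add_left 1 t) (mem_Ico.mp ht).2)
    rwa [← gram_succ hM] at h
  have hQT : (Q T).trace ≤ (psqrt (Gb ^ 2 • 1 + M T)).trace := by
    refine trace_le_trace_of_le (psqrt_le_psqrt (hreg T) ?_)
    rw [le_iff, show Gb ^ 2 • 1 + M T - (r ^ 2 • M T + c • 1) =
      (r ^ 2 * Gb ^ 2) • 1 + (1 - r ^ 2) • M T by module]
    exact (PosSemidef.one.smul (by positivity)).add ((posSemidef_gram hM T).smul (by nlinarith))
  have hQ1 : r * nuclearNorm (G 1) ≤ (Q 1).trace := by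
    have hM1 := posSemidef_gram hM 1
    rw [nuclearNorm_eq_trace_psqrt_gram hM, ← smul_eq_mul, ← trace_smul]
    refine trace_le_trace_of_le
      (le_of_mul_self_le_mul_self (hM1.psqrt.smul hr0.le) (hreg 1).psqrt ?_)
    rw [psqrt_mul_psqrt (hreg 1), smul_mul_smul, psqrt_mul_psqrt hM1, le_iff, ← sq,
      add_sub_cancel_left]
    exact PosSemidef.one.smul hc.le
  linarith

theorem sum_trace_inv_psqrt_mul_le {Gb : ℝ} (hGb : 0 < Gb) {T : ℕ} (hT : 1 ≤ T)
    (hG : ∀ t, 1 ≤ t → t ≤ T → G t * (G t)ᵀ ≤ Gb ^ 2 • 1)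
    (hM : ∀ t, M t = ∑ s ∈ Icc 1 t, G s * (G s)ᵀ) :
    ∑ t ∈ Ico 1 T, ((psqrt (Gb ^ 2 • 1 + M t))⁻¹ * (G (t + 1) * (G (t + 1))ᵀ)).trace ≤
      2 * (psqrt (Gb ^ 2 • 1 + M T)).trace - 2 * nuclearNorm (G 1) :=
  le_sub_of_forall_sq_mul_le fun r ⟨hr0, hr1⟩ => by
    linarith [sq_mul_sum_trace_inv_psqrt_mul_le hGb hr0 hr1 hT hG hM]

end TracePotential

section GBPA

variable {m : ℕ} {n : Type*} [Fintype n]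

lemma ip_zero_right (A : Matrix (Fin m) n ℝ) : ip A 0 = 0 := by
  simp [ip]

lemma ip_smul_right (c : ℝ) (A B : Matrix (Fin m) n ℝ) : ip A (c • B) = c * ip A B := by
  rw [ip, ip, Matrix.mul_smul, trace_smul, smul_eq_mul]

lemma ip_comm (A B : Matrix (Fin m) n ℝ) : ip A B = ip B A := by
  rw [ip, ip, ← trace_transpose, transpose_mul, transpose_transpose]

theorem gbpa_regret_eq (D : ℝ) (Φ : ℕ → Matrix (Fin m) n ℝ → ℝ)
    (gradΦ : ℕ → Matrix (Fin m) n ℝ → Matrix (Fin m) n ℝ) (G S X : ℕ → Matrix (Fin m) n ℝ)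
    (hX1 : X 1 = 0) (hX : ∀ t, 1 ≤ t → X (t + 1) = (-D) • gradΦ t (S t)) {T : ℕ} (hT : 1 ≤ T) :
    ∑ t ∈ Icc 1 T, ip (G t) (X t) + D * Φ T (S T) =
      D * Φ 1 (S 1) + D * ∑ t ∈ Ico 1 T,
        (Φ (t + 1) (S (t + 1)) - Φ t (S t) - ip (gradΦ t (S t)) (G (t + 1))) := by
  induction T, hT using Nat.le_induction with
  | base => simp [hX1, ip_zero_right]
  | succ T hT ih =>
    rw [sum_Icc_succ_top (by omega), sum_Ico_succ_top hT, hX T hT, ip_smul_right, ip_comm]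
    linear_combination ih

lemma smoothing_step_le {α β η : ℝ} (hη : 0 < η)
    {Ψ : Matrix (Fin m) n ℝ → Matrix (Fin m) (Fin m) ℝ → ℝ}
    {g : Matrix (Fin m) n ℝ → Matrix (Fin m) (Fin m) ℝ → Matrix (Fin m) n ℝ}
    (hstab : ∀ L₁ L₂ : Matrix (Fin m) (Fin m) ℝ, L₁.PosSemidef → (L₂ - L₁).PosSemidef →
      ∀ X, Ψ X L₂ - Ψ X L₁ ≤ α * (L₂.trace - L₁.trace))
    (hsmooth : ∀ L : Matrix (Fin m) (Fin m) ℝ, L.PosDef → ∀ X Y,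
      Ψ Y L - Ψ X L - ip (g X L) (Y - X) ≤ β / 2 * ((X - Y)ᵀ * L⁻¹ * (X - Y)).trace)
    {L L' : Matrix (Fin m) (Fin m) ℝ} (hL : L.PosDef) (hLL' : L ≤ L') (S G : Matrix (Fin m) n ℝ) :
    Ψ (S + G) (η⁻¹ • L') - Ψ S (η⁻¹ • L) - ip (g S (η⁻¹ • L)) G ≤
      α * η⁻¹ * (L'.trace - L.trace) + β * η / 2 * (L⁻¹ * (G * Gᵀ)).trace := by
  have hstab' := hstab (η⁻¹ • L) (η⁻¹ • L') (hL.posSemidef.smul (inv_nonneg.mpr hη.le))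
    (by rw [← smul_sub]; exact (le_iff.mp hLL').smul (inv_nonneg.mpr hη.le)) (S + G)
  have hsmooth' := hsmooth (η⁻¹ • L) (hL.smul (inv_pos.mpr hη)) S (S + G)
  have hinv : (η⁻¹ • L)⁻¹ = η • L⁻¹ := by
    refine inv_eq_left_inv ?_
    rw [smul_mul_smul, nonsing_inv_mul _ hL.det_pos.ne'.isUnit, mul_inv_cancel₀ hη.ne', one_smul]
  simp only [hinv, sub_add_cancel_left, add_sub_cancel_left, transpose_neg, Matrix.neg_mul,
    Matrix.mul_neg, neg_neg] at hsmooth'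
  rw [Matrix.mul_smul, Matrix.smul_mul, trace_smul, trace_mul_cycle, trace_mul_comm] at hsmooth'
  rw [trace_smul, trace_smul] at hstab'
  simp only [smul_eq_mul] at hstab' hsmooth'
  linear_combination hstab' + hsmooth'

theorem gbpa_regret_le {D α β η : ℝ} (hD : 0 ≤ D) (hη : 0 < η)
    {Ψ : Matrix (Fin m) n ℝ → Matrix (Fin m) (Fin m) ℝ → ℝ}
    {g : Matrix (Fin m) n ℝ → Matrix (Fin m) (Fin m) ℝ → Matrix (Fin m) n ℝ}
    (hdom : ∀ L : Matrix (Fin m) (Fin m) ℝ, L.PosSemidef → ∀ X, nuclearNorm X ≤ Ψ X L)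
    (hzero : ∀ X, Ψ X 0 = nuclearNorm X)
    (hstab : ∀ L₁ L₂ : Matrix (Fin m) (Fin m) ℝ, L₁.PosSemidef → (L₂ - L₁).PosSemidef →
      ∀ X, Ψ X L₂ - Ψ X L₁ ≤ α * (L₂.trace - L₁.trace))
    (hsmooth : ∀ L : Matrix (Fin m) (Fin m) ℝ, L.PosDef → ∀ X Y,
      Ψ Y L - Ψ X L - ip (g X L) (Y - X) ≤ β / 2 * ((X - Y)ᵀ * L⁻¹ * (X - Y)).trace)
    {T : ℕ} (hT : 1 ≤ T) {G S X : ℕ → Matrix (Fin m) n ℝ} (hS : ∀ t, S t = ∑ s ∈ Icc 1 t, G s)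
    {L : ℕ → Matrix (Fin m) (Fin m) ℝ} (hL : ∀ t, (L t).PosDef) (hLmono : ∀ t, L t ≤ L (t + 1))
    (hX1 : X 1 = 0) (hX : ∀ t, 1 ≤ t → X (t + 1) = (-D) • g (S t) (η⁻¹ • L t)) :
    ∑ t ∈ Icc 1 T, ip (G t) (X t) + D * nuclearNorm (S T) ≤
      D * nuclearNorm (G 1) + D * (α * η⁻¹) * (L T).trace +
        D * (β * η / 2) * ∑ t ∈ Ico 1 T, ((L t)⁻¹ * (G (t + 1) * (G (t + 1))ᵀ)).trace := by
  have hregret := gbpa_regret_eq D (fun t Y => Ψ Y (η⁻¹ • L t)) (fun t Y => g Y (η⁻¹ • L t))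
    G S X hX1 hX hT
  have hsteps : ∑ t ∈ Ico 1 T, (Ψ (S (t + 1)) (η⁻¹ • L (t + 1)) - Ψ (S t) (η⁻¹ • L t) -
        ip (g (S t) (η⁻¹ • L t)) (G (t + 1))) ≤
      α * η⁻¹ * ((L T).trace - (L 1).trace) +
        β * η / 2 * ∑ t ∈ Ico 1 T, ((L t)⁻¹ * (G (t + 1) * (G (t + 1))ᵀ)).trace := by
    rw [← sum_Ico_sub (fun t => (L t).trace) hT, mul_sum, mul_sum, ← sum_add_distrib]
    refine sum_le_sum fun t _ => ?_
    rw [hS (t + 1), sum_Icc_succ_top (Nat.le_add_left 1 t), ← hS t]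
    exact smoothing_step_le hη hstab hsmooth (hL t) (hLmono t) (S t) (G (t + 1))
  have hS1 : S 1 = G 1 := by simp [hS]
  have hinit : Ψ (S 1) (η⁻¹ • L 1) ≤ nuclearNorm (G 1) + α * η⁻¹ * (L 1).trace := by
    have h := hstab 0 (η⁻¹ • L 1) PosSemidef.zero
      (by simpa using (hL 1).posSemidef.smul (inv_nonneg.mpr hη.le)) (G 1)
    rw [hzero, trace_smul, trace_zero, smul_eq_mul] at h
    rw [hS1]
    linarith
  have hfinal := hdom _ ((hL T).posSemidef.smul (inv_nonneg.mpr hη.le)) (S T)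
  linarith [mul_le_mul_of_nonneg_left hsteps hD, mul_le_mul_of_nonneg_left hinit hD,
    mul_le_mul_of_nonneg_left hfinal hD]

end GBPA

theorem stmt16_general {m n : ℕ} (T : ℕ) (hT : 1 ≤ T) (D Gb α β : ℝ)
    (hD : 0 < D) (hG : 0 < Gb) (hα : 0 < α) (hβ : 0 < β)
    (Ψ : Matrix (Fin m) (Fin n) ℝ → Matrix (Fin m) (Fin m) ℝ → ℝ)
    (g : Matrix (Fin m) (Fin n) ℝ → Matrix (Fin m) (Fin m) ℝ → Matrix (Fin m) (Fin n) ℝ)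
    -- (b) dominance
    (hdom : ∀ (L : Matrix (Fin m) (Fin m) ℝ), L.PosSemidef →
      ∀ X, nuclearNorm X ≤ Ψ X L)
    (hzero : ∀ X, Ψ X 0 = nuclearNorm X)
    -- (c) upper stability
    (hstab : ∀ L₁ L₂ : Matrix (Fin m) (Fin m) ℝ, L₁.PosSemidef → (L₂ - L₁).PosSemidef →
      ∀ X, Ψ X L₂ - Ψ X L₁ ≤ α * (L₂.trace - L₁.trace))
    -- (d) smoothness of the Bregman divergence
    (hsmooth : ∀ L : Matrix (Fin m) (Fin m) ℝ, L.PosDef → ∀ X Y,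
      Ψ Y L - Ψ X L - ip (g X L) (Y - X)
        ≤ β / 2 * ((X - Y)ᵀ * L⁻¹ * (X - Y)).trace)
    -- problem data
    (G : ℕ → Matrix (Fin m) (Fin n) ℝ)
    (hGb : ∀ t, 1 ≤ t → t ≤ T →
      ((Gb ^ 2) • (1 : Matrix (Fin m) (Fin m) ℝ) - G t * (G t)ᵀ).PosSemidef)
    (M : ℕ → Matrix (Fin m) (Fin m) ℝ)
    (hM : ∀ t, M t = ∑ s ∈ Finset.Icc 1 t, G s * (G s)ᵀ)
    (L : ℕ → Matrix (Fin m) (Fin m) ℝ)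
    (hL : ∀ t, L t = psqrt ((Gb ^ 2) • (1 : Matrix (Fin m) (Fin m) ℝ) + M t))
    (η : ℝ) (hη : η = Real.sqrt (α / β))
    (S : ℕ → Matrix (Fin m) (Fin n) ℝ)
    (hS : ∀ t, S t = ∑ s ∈ Finset.Icc 1 t, G s)
    -- GBPA iterates `X (t+1) = −D ∇Φ̃_t(S t)` with `Φ̃_t = Ψ(·; L t / η)`
    (X : ℕ → Matrix (Fin m) (Fin n) ℝ)
    (hX1 : X 1 = 0)
    (hX : ∀ t, 1 ≤ t → X (t + 1) = (-D) • g (S t) (η⁻¹ • L t)) :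
    (∑ t ∈ Finset.Icc 1 T, ip (G t) (X t)) + D * nuclearNorm (S T)
      ≤ 2 * Real.sqrt (α * β) * D *
          (psqrt ((Gb ^ 2) • (1 : Matrix (Fin m) (Fin m) ℝ) + M T)).trace +
        (1 - Real.sqrt (α * β)) * D * nuclearNorm (G 1) := by
  have hη0 : 0 < η := hη ▸ Real.sqrt_pos.mpr (div_pos hα hβ)
  have hαη : α * η⁻¹ = √(α * β) := by
    rw [hη, Real.sqrt_div hα.le, Real.sqrt_mul hα.le, inv_div]
    field_simp
    rw [Real.sq_sqrt hα.le]
  have hβη : β * η = √(α * β) := by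
    rw [hη, Real.sqrt_div hα.le, Real.sqrt_mul hα.le]
    field_simp
    rw [Real.sq_sqrt hβ.le]
  have hA : ∀ t, ((Gb ^ 2) • (1 : Matrix (Fin m) (Fin m) ℝ) + M t).PosDef := fun t =>
    (PosDef.one.smul (by positivity)).add_posSemidef (posSemidef_gram hM t)
  have hLmono : ∀ t, L t ≤ L (t + 1) := fun t => by
    rw [hL, hL, gram_succ hM, ← add_assoc]
    exact psqrt_le_psqrt (hA t).posSemidef (le_add_of_nonneg_right
      (nonneg_iff_posSemidef.mpr (posSemidef_self_mul_transpose _)))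
  have hregret := gbpa_regret_le hD.le hη0 hdom hzero hstab hsmooth hT hS
    (fun t => hL t ▸ (hA t).psqrt) hLmono hX1 hX
  have hpotential := sum_trace_inv_psqrt_mul_le hG hT hGb hM
  simp only [← hL] at hpotential hregret ⊢
  rw [hαη, hβη] at hregret
  linarith [mul_le_mul_of_nonneg_left hpotential (by positivity : 0 ≤ D * √(α * β) / 2)]

/-- Theorem 3.2: under an `(α,β)`-admissible smoothing `Ψ` of the
nuclear norm (with gradient `g`), the GBPA with potentials `Φ̃_t(S) = Ψ(S; L t / η)`,
where `L t = √(G² I + M t)`, `M t = ∑_{s=1}^t G_s G_sᵀ`, `‖G_t‖_op ≤ G`, and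
`η = √(α/β)`, achieves regret
`Reg_T ≤ 2√(αβ) D tr(√(G² I + M T)) + (1 − √(αβ)) D ‖G 1‖_*`. -/
theorem stmt16 {m n : ℕ} (T : ℕ) (hT : 1 ≤ T) (D Gb α β : ℝ)
    (hD : 0 < D) (hG : 0 < Gb) (hα : 0 < α) (hβ : 0 < β)
    (Ψ : Matrix (Fin m) (Fin n) ℝ → Matrix (Fin m) (Fin m) ℝ → ℝ)
    (g : Matrix (Fin m) (Fin n) ℝ → Matrix (Fin m) (Fin m) ℝ → Matrix (Fin m) (Fin n) ℝ)
    -- (a) feasibility: `‖∇_X Ψ(X; L)‖_op ≤ 1`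
    (hfeas : ∀ (L : Matrix (Fin m) (Fin m) ℝ), L.PosSemidef → ∀ X,
      ((1 : Matrix (Fin m) (Fin m) ℝ) - g X L * (g X L)ᵀ).PosSemidef)
    -- (b) dominance
    (hdom : ∀ (L : Matrix (Fin m) (Fin m) ℝ), L.PosSemidef →
      ∀ X, nuclearNorm X ≤ Ψ X L)
    (hzero : ∀ X, Ψ X 0 = nuclearNorm X)
    -- (c) upper stability
    (hstab : ∀ L₁ L₂ : Matrix (Fin m) (Fin m) ℝ, L₁.PosSemidef → (L₂ - L₁).PosSemidef →
      ∀ X, Ψ X L₂ - Ψ X L₁ ≤ α * (L₂.trace - L₁.trace))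
    -- `g` is the gradient of `Ψ(·; L)` for positive definite `L`
    (hgrad : ∀ L : Matrix (Fin m) (Fin m) ℝ, L.PosDef → ∀ X Dir,
      HasDerivAt (fun τ : ℝ => Ψ (X + τ • Dir) L) (ip (g X L) Dir) 0)
    -- (d) smoothness of the Bregman divergence
    (hsmooth : ∀ L : Matrix (Fin m) (Fin m) ℝ, L.PosDef → ∀ X Y,
      Ψ Y L - Ψ X L - ip (g X L) (Y - X)
        ≤ β / 2 * ((X - Y)ᵀ * L⁻¹ * (X - Y)).trace)
    -- problem data
    (G : ℕ → Matrix (Fin m) (Fin n) ℝ)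
    (hGb : ∀ t, 1 ≤ t → t ≤ T →
      ((Gb ^ 2) • (1 : Matrix (Fin m) (Fin m) ℝ) - G t * (G t)ᵀ).PosSemidef)
    (M : ℕ → Matrix (Fin m) (Fin m) ℝ)
    (hM : ∀ t, M t = ∑ s ∈ Finset.Icc 1 t, G s * (G s)ᵀ)
    (L : ℕ → Matrix (Fin m) (Fin m) ℝ)
    (hL : ∀ t, L t = psqrt ((Gb ^ 2) • (1 : Matrix (Fin m) (Fin m) ℝ) + M t))
    (η : ℝ) (hη : η = Real.sqrt (α / β))
    (S : ℕ → Matrix (Fin m) (Fin n) ℝ)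
    (hS : ∀ t, S t = ∑ s ∈ Finset.Icc 1 t, G s)
    -- GBPA iterates `X (t+1) = −D ∇Φ̃_t(S t)` with `Φ̃_t = Ψ(·; L t / η)`
    (X : ℕ → Matrix (Fin m) (Fin n) ℝ)
    (hX1 : X 1 = 0)
    (hX : ∀ t, 1 ≤ t → X (t + 1) = (-D) • g (S t) (η⁻¹ • L t)) :
    (∑ t ∈ Finset.Icc 1 T, ip (G t) (X t)) + D * nuclearNorm (S T)
      ≤ 2 * Real.sqrt (α * β) * D *
          (psqrt ((Gb ^ 2) • (1 : Matrix (Fin m) (Fin m) ℝ) + M T)).trace +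
        (1 - Real.sqrt (α * β)) * D * nuclearNorm (G 1) :=
  stmt16_general T hT D Gb α β hD hG hα hβ Ψ g hdom hzero hstab hsmooth G hGb M hM L hL η hη S hS X
    hX1 hX
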